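/- arXiv:0711.0604 — 6 statements merged into one kernel-verified Lean document; each statement's English description precedes it below -/
import Mathlib

section
/- Let l be a prime, G a commutative group, and σ : G ≃* G a group automorphism with σ^l = id. Write tr : ℤ[G] → ℤ[G] for the ℤ-linear trace map sending a basis element [g] to ∑_{i=0}^{l-1} [σ^i(g)], and T for the image of tr (an ideal of ℤ[G]). Then for every g ∈ G there exists y ∈ T such that (∑_{i=0}^{l-1} [σ^i(g)])^l − ∑_{i=0}^{l-1} [σ^i(g^l)] + l·[∏_{i=0}^{l-1} σ^i(g)] = l·y. (This is Lemma 6 of the paper: (tr_A g')^l − tr_A(g'^l) ≡ −l·g'^Â mod l·T'.) -/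
/-!
Put `xᵢ = τⁱ a` for `i : Fin l` and expand `(∑ xᵢ) ^ l` by the multinomial theorem, over exponent
vectors `k : Fin l → ℕ` with `∑ kᵢ = l`. Since `τ xᵢ = xᵢ₊₁`, applying `τ ^ c` to the monomial of
`k` gives the monomial of the cyclically shifted vector `c +ᵥ k`. The vectors `l • eᵢ` form one
orbit, contributing `∑ xᵢ ^ l = tr (a ^ l)`. The all-ones vector is shift-invariant and contributes
`l! • ∏ xᵢ`; as `∏ xᵢ` is `τ`-fixed, `l • ∏ xᵢ = tr (∏ xᵢ)`, and Wilson's theorem `l² ∣ l! + l`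
turns `l! • ∏ xᵢ + l • ∏ xᵢ` into `l • tr (…)`. Every other vector has trivial stabiliser (`l` is
prime) and multinomial coefficient divisible by `l`, so its orbit contributes `l • tr (…)` as well.
-/

open MonoidAlgebra Finset Fin.NatCast

theorem sum_mem_of_orbit_sum_mem {C X M : Type*} [AddGroup C] [Fintype C] [AddAction C X]
    [AddCommMonoid M] [DecidableEq X] {S : AddSubmonoid M} {f : X → M} (B : Finset X)
    (hB : ∀ x ∈ B, ∀ c : C, c +ᵥ x ∈ B) (hfree : ∀ x ∈ B, ∀ c : C, c +ᵥ x = x → c = 0)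
    (horbit : ∀ x ∈ B, ∑ c : C, f (c +ᵥ x) ∈ S) : ∑ x ∈ B, f x ∈ S := by
  induction B using Finset.strongInduction with
  | H B ih =>
  obtain rfl | ⟨x, hx⟩ := B.eq_empty_or_nonempty
  · exact zero_mem S
  set O := univ.image (· +ᵥ x : C → X)
  have hinj : Function.Injective (· +ᵥ x : C → X) := fun c d (h : c +ᵥ x = d +ᵥ x) =>
    neg_add_eq_zero.mp <| hfree x hx _ <| by rw [add_vadd, ← h, neg_vadd_vadd]
  have hOB : O ⊆ B := by simpa [O, subset_iff] using hB x hx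
  have hdiff : ∀ y ∈ B \ O, ∀ c : C, c +ᵥ y ∈ B \ O := by
    simp only [O, mem_sdiff, mem_image, mem_univ, true_and, not_exists]
    refine fun y ⟨hy, hyO⟩ c => ⟨hB y hy c, fun d hd => hyO (-c + d) ?_⟩
    rw [add_vadd, hd, neg_vadd_vadd]
  rw [← sum_sdiff hOB, sum_image hinj.injOn]
  refine add_mem (ih _ (sdiff_ssubset hOB ⟨x, mem_image.mpr ⟨0, mem_univ _, zero_vadd C x⟩⟩)
    hdiff (fun y hy => hfree y (mem_sdiff.mp hy).1) (fun y hy => horbit y (mem_sdiff.mp hy).1))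
    (horbit x hx)

attribute [local instance] arrowAddAction

section ExponentVectors

variable {G : Type*} [AddGroup G]

theorem arrow_vadd_apply {α : Type*} (c i : G) (k : G → α) : (c +ᵥ k) i = k (-c + i) := rfl

theorem arrow_vadd_single [DecidableEq G] (c i : G) (n : ℕ) :
    c +ᵥ (Pi.single i n : G → ℕ) = Pi.single (c + i) n := by
  funext j
  simp only [arrow_vadd_apply, Pi.single_apply, neg_add_eq_iff_eq_add]

variable [Fintype G]

theorem sum_arrow_vadd {M : Type*} [AddCommMonoid M] (c : G) (k : G → M) :
    ∑ i, (c +ᵥ k) i = ∑ i, k i :=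
  Equiv.sum_comp (Equiv.addLeft (-c)) k

theorem multinomial_arrow_vadd (c : G) (k : G → ℕ) :
    Nat.multinomial univ (c +ᵥ k) = Nat.multinomial univ k := by
  simp only [Nat.multinomial, sum_arrow_vadd]
  rw [← Equiv.prod_comp (Equiv.addLeft (-c)) fun i => (k i).factorial]
  rfl

theorem eq_one_of_arrow_vadd_eq_self (hG : (Nat.card G).Prime) {c : G} (hc : c ≠ 0)
    {k : G → ℕ} (hk : ∑ i, k i = Nat.card G) (h : c +ᵥ k = k) : k = 1 := by
  have := Fact.mk hG
  have htop : AddAction.stabilizer G k = ⊤ :=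
    (AddAction.stabilizer G k).eq_bot_or_eq_top_of_prime_card.resolve_left fun hbot =>
      hc <| (AddSubgroup.mem_bot).mp <| hbot ▸ AddAction.mem_stabilizer_iff.mpr h
  have hconst : ∀ i, k i = k 0 := fun i => by
    have hi : -i ∈ AddAction.stabilizer G k := htop ▸ AddSubgroup.mem_top _
    simpa [arrow_vadd_apply] using congrFun (AddAction.mem_stabilizer_iff.mp hi) 0
  rw [Finset.sum_congr rfl fun i _ => hconst i, sum_const, card_univ, smul_eq_mul,
    ← Nat.card_eq_fintype_card] at hk
  funext i
  rw [hconst i, Pi.one_apply]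
  exact (Nat.mul_eq_left hG.ne_zero).mp hk

end ExponentVectors

theorem eq_single_of_sum_eq_of_apply_eq {ι : Type*} [Fintype ι] [DecidableEq ι] {k : ι → ℕ}
    {n : ℕ} {i : ι} (hk : ∑ j, k j = n) (hi : k i = n) : k = Pi.single i n := by
  funext j
  by_cases hj : j = i
  · subst hj; simp [hi]
  · have : k i + k j ≤ n := hk ▸ (sum_pair (Ne.symm hj)).symm.le.trans
      (sum_le_univ_sum_of_nonneg fun _ => Nat.zero_le _)
    simp only [Pi.single_apply, hj, if_false]
    omega

theorem Nat.Prime.dvd_multinomial {α : Type*} {p : ℕ} (hp : p.Prime) {s : Finset α} {k : α → ℕ}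
    (hk : ∑ i ∈ s, k i = p) (h : ∀ i ∈ s, k i ≠ p) : p ∣ Nat.multinomial s k := by
  have hspec := Nat.multinomial_spec s k
  rw [hk] at hspec
  refine (Nat.Coprime.dvd_of_dvd_mul_left ?_ (hspec ▸ Nat.dvd_factorial hp.pos le_rfl))
  refine hp.coprime_iff_not_dvd.mpr fun hdvd => ?_
  obtain ⟨i, hi, hpi⟩ := (Prime.dvd_finsetProd_iff hp.prime _).mp hdvd
  have hle : k i ≤ p := hk ▸ single_le_sum (fun _ _ => Nat.zero_le _) hi
  exact h i hi (le_antisymm hle (hp.dvd_factorial.mp hpi))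

theorem Nat.Prime.sq_dvd_factorial_add_self {p : ℕ} (hp : p.Prime) : p ^ 2 ∣ p.factorial + p := by
  have := Fact.mk hp
  obtain ⟨w, hw⟩ : p ∣ (p - 1).factorial + 1 :=
    (ZMod.natCast_eq_zero_iff _ _).mp (by push_cast [ZMod.wilsons_lemma]; ring)
  exact ⟨w, by rw [← Nat.mul_factorial_pred hp.ne_zero, ← Nat.mul_add_one, hw]; ring⟩

section CyclicTrace

variable {A : Type*} [CommRing A]

def cyclicTrace (τ : A →+* A) (l : ℕ) : A →+ A := ∑ n ∈ range l, (τ ^ n).toAddMonoidHom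

variable {τ : A →+* A} {l : ℕ}

theorem cyclicTrace_apply (a : A) : cyclicTrace τ l a = ∑ n ∈ range l, (τ ^ n) a := by
  simp [cyclicTrace]

theorem cyclicTrace_apply_of_apply_eq {a : A} (ha : τ a = a) : cyclicTrace τ l a = l • a := by
  simp [cyclicTrace_apply, RingHom.coe_pow, Function.iterate_fixed ha]

variable [NeZero l] {x : Fin l → A}

theorem pow_apply_eq_of_apply_eq_add_one (hx : ∀ i, τ (x i) = x (i + 1)) (n : ℕ) (i : Fin l) :
    (τ ^ n) (x i) = x (i + (n : Fin l)) := by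
  induction n with
  | zero => simp
  | succ n ih =>
    rw [pow_succ', RingHom.coe_mul, Function.comp_apply, ih, hx, Nat.cast_succ, add_assoc]

theorem pow_val_apply_prod_pow (hx : ∀ i, τ (x i) = x (i + 1)) (c : Fin l) (k : Fin l → ℕ) :
    (τ ^ (c : ℕ)) (∏ i, x i ^ k i) = ∏ i, x i ^ (c +ᵥ k) i := by
  simp only [map_prod, map_pow, pow_apply_eq_of_apply_eq_add_one hx, Fin.cast_val_eq_self,
    arrow_vadd_apply]
  rw [← Equiv.prod_comp (Equiv.addLeft c) fun i => x i ^ k (-c + i)]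
  simp [add_comm]

theorem apply_prod_eq_of_apply_eq_add_one (hx : ∀ i, τ (x i) = x (i + 1)) :
    τ (∏ i, x i) = ∏ i, x i := by
  rw [map_prod]
  simp only [hx]
  exact Equiv.prod_comp (Equiv.addRight 1) x

theorem sum_arrow_vadd_multinomial_smul (hx : ∀ i, τ (x i) = x (i + 1)) (k : Fin l → ℕ) :
    ∑ c : Fin l, Nat.multinomial univ (c +ᵥ k) • ∏ i, x i ^ (c +ᵥ k) i
      = Nat.multinomial univ k • cyclicTrace τ l (∏ i, x i ^ k i) := by
  simp only [multinomial_arrow_vadd, ← pow_val_apply_prod_pow hx, ← smul_sum, cyclicTrace_apply]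
  rw [Fin.sum_univ_eq_sum_range (fun n => (τ ^ n) (∏ i, x i ^ k i))]

end CyclicTrace

section MixedExponents

variable {l : ℕ} [NeZero l] {k : Fin l → ℕ}

def mixedExponents (l : ℕ) [NeZero l] : Finset (Fin l → ℕ) :=
  (piAntidiag univ l \ univ.image fun i => Pi.single i l).erase 1

theorem mem_mixedExponents :
    k ∈ mixedExponents l ↔ k ≠ 1 ∧ ∑ i, k i = l ∧ ∀ i, k ≠ Pi.single i l := by
  simp [mixedExponents, eq_comm]

theorem arrow_vadd_mem_mixedExponents (hk : k ∈ mixedExponents l) (c : Fin l) :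
    c +ᵥ k ∈ mixedExponents l := by
  obtain ⟨hk1, hsum, hsingle⟩ := mem_mixedExponents.mp hk
  refine mem_mixedExponents.mpr ⟨fun h => hk1 ?_, (sum_arrow_vadd c k).trans hsum, fun i h => ?_⟩
  · rw [← neg_vadd_vadd c k, h]
    rfl
  · exact hsingle (-c + i) (by rw [← neg_vadd_vadd c k, h, arrow_vadd_single])

theorem eq_zero_of_arrow_vadd_eq_self (hl : l.Prime) (hk : k ∈ mixedExponents l) {c : Fin l}
    (h : c +ᵥ k = k) : c = 0 := by
  obtain ⟨hk1, hsum, -⟩ := mem_mixedExponents.mp hk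
  by_contra hc
  exact hk1 <| eq_one_of_arrow_vadd_eq_self (by rwa [Nat.card_fin]) hc
    (by rwa [Nat.card_fin]) h

theorem prime_dvd_multinomial_of_mem_mixedExponents (hl : l.Prime) (hk : k ∈ mixedExponents l) :
    l ∣ Nat.multinomial univ k := by
  obtain ⟨-, hsum, hsingle⟩ := mem_mixedExponents.mp hk
  exact hl.dvd_multinomial hsum fun i _ hi => hsingle i (eq_single_of_sum_eq_of_apply_eq hsum hi)

theorem sum_pow_eq_sum_pow_add_factorial_smul_prod_add {A : Type*} [CommSemiring A] (hl : 1 < l)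
    (x : Fin l → A) :
    (∑ i, x i) ^ l = ∑ i, x i ^ l +
      (l.factorial • ∏ i, x i +
        ∑ k ∈ mixedExponents l, Nat.multinomial univ k • ∏ i, x i ^ k i) := by
  have hsingle : univ.image (fun i : Fin l => Pi.single i l) ⊆ piAntidiag univ l := by
    simp [subset_iff]
  have hone : (1 : Fin l → ℕ) ∈ piAntidiag univ l \ univ.image fun i => Pi.single i l := by
    simp only [mem_sdiff, mem_piAntidiag, mem_image, mem_univ, true_and, not_exists]
    refine ⟨⟨by simp, by simp⟩, fun i h => hl.ne' ?_⟩
    simpa using congrFun h i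
  have hinj : Set.InjOn (fun i : Fin l => (Pi.single i l : Fin l → ℕ)) (univ : Finset (Fin l)) :=
    fun i _ j _ h => by_contra fun hij => NeZero.ne l (by simpa [hij] using congrFun h i)
  have hsingle_term : ∀ i, Nat.multinomial univ (Pi.single i l) •
      ∏ j, x j ^ (Pi.single i l : Fin l → ℕ) j = x i ^ l := fun i => by
    rw [Nat.multinomial_single, one_smul, Fintype.prod_eq_single i fun j hj => by simp [hj]]
    simp
  have hmult : Nat.multinomial univ (1 : Fin l → ℕ) = l.factorial := by
    simp [Nat.multinomial]
  simp only [sum_pow_eq_sum_piAntidiag, ← nsmul_eq_mul]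
  rw [mixedExponents, ← sum_sdiff hsingle, ← add_sum_erase _ _ hone, sum_image hinj, hmult]
  simp only [Pi.one_apply, pow_one, hsingle_term]
  abel

end MixedExponents

section CyclicTracePower

variable {A : Type*} [CommRing A] {τ : A →+* A} {l : ℕ}

theorem sum_pow_sub_sum_pow_add_prod_mem [Fact l.Prime] {x : Fin l → A}
    (hx : ∀ i, τ (x i) = x (i + 1)) :
    (∑ i, x i) ^ l - ∑ i, x i ^ l + l • ∏ i, x i ∈ AddMonoidHom.mrange (l • cyclicTrace τ l) := by
  have hl : l.Prime := Fact.out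
  have hmixed : ∑ k ∈ mixedExponents l, Nat.multinomial univ k • ∏ i, x i ^ k i
      ∈ AddMonoidHom.mrange (l • cyclicTrace τ l) := by
    refine sum_mem_of_orbit_sum_mem _ (fun k hk c => arrow_vadd_mem_mixedExponents hk c)
      (fun k hk c => eq_zero_of_arrow_vadd_eq_self hl hk) fun k hk => ?_
    obtain ⟨m, hm⟩ := prime_dvd_multinomial_of_mem_mixedExponents hl hk
    refine ⟨m • ∏ i, x i ^ k i, ?_⟩
    rw [sum_arrow_vadd_multinomial_smul hx, hm, AddMonoidHom.smul_apply, map_nsmul, mul_smul]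
  have hall_ones : l.factorial • ∏ i, x i + l • ∏ i, x i
      ∈ AddMonoidHom.mrange (l • cyclicTrace τ l) := by
    obtain ⟨w, hw⟩ := hl.sq_dvd_factorial_add_self
    refine ⟨w • ∏ i, x i, ?_⟩
    rw [AddMonoidHom.smul_apply, map_nsmul,
      cyclicTrace_apply_of_apply_eq (apply_prod_eq_of_apply_eq_add_one hx), ← add_smul, hw,
      smul_smul, smul_smul]
    ring_nf
  rw [sum_pow_eq_sum_pow_add_factorial_smul_prod_add hl.one_lt]
  convert add_mem hall_ones hmixed using 1
  abel

theorem cyclicTrace_pow_sub_cyclicTrace_pow_add_prod_mem (hl : l.Prime) {a : A}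
    (ha : (τ ^ l) a = a) :
    cyclicTrace τ l a ^ l - cyclicTrace τ l (a ^ l) + l • ∏ n ∈ range l, (τ ^ n) a
      ∈ AddMonoidHom.mrange (l • cyclicTrace τ l) := by
  have := Fact.mk hl
  have hper : Function.IsPeriodicPt τ l a := by rwa [RingHom.coe_pow] at ha
  have hx : ∀ i : Fin l, τ ((τ ^ (i : ℕ)) a) = (τ ^ ((i + 1 : Fin l) : ℕ)) a := fun i => by
    rw [Fin.val_add, Fin.val_one', Nat.add_mod_mod, RingHom.coe_pow, RingHom.coe_pow,
      hper.iterate_mod_apply, Function.iterate_succ_apply']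
  simpa only [cyclicTrace_apply, map_pow, ← Fin.sum_univ_eq_sum_range,
    ← Fin.prod_univ_eq_prod_range] using sum_pow_sub_sum_pow_add_prod_mem hx

end CyclicTracePower

theorem mapDomainRingHom_pow_of {R M : Type*} [Semiring R] [Monoid M] (σ : MulAut M) (n : ℕ)
    (m : M) : (mapDomainRingHom R (σ : M →* M) ^ n) (of R M m) = of R M ((σ ^ n) m) := by
  induction n with
  | zero => rfl
  | succ n ih =>
    rw [pow_succ', RingHom.coe_mul, Function.comp_apply, ih, pow_succ', MulAut.mul_apply,
      mapDomainRingHom_apply, of_apply, mapDomain_single]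
    rfl

/-- **Lemma 6 of the paper.**  For a prime `l`, a commutative group `G` and an
automorphism `σ` of `G` with `σ ^ l = 1`, let `tr` be the ℤ-linear trace map on the
group ring `ℤ[G]` sending the basis element `[g]` to `∑_{i=0}^{l-1} [σ^i g]`, and let
`T = range tr`.  Then `(tr g)^l - tr (g^l) + l·[∏_i σ^i g] = l·y` for some `y ∈ T`. -/
theorem stmt0 (l : ℕ) (hl : l.Prime) (G : Type*) [CommGroup G]
    (σ : MulAut G) (hσ : σ ^ l = 1)
    (tr : MonoidAlgebra ℤ G →ₗ[ℤ] MonoidAlgebra ℤ G)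
    (htr : ∀ g : G, tr (of ℤ G g) = ∑ i ∈ Finset.range l, of ℤ G ((σ ^ i) g))
    (g : G) :
    ∃ y ∈ LinearMap.range tr,
      (∑ i ∈ Finset.range l, of ℤ G ((σ ^ i) g)) ^ l
        - (∑ i ∈ Finset.range l, of ℤ G ((σ ^ i) (g ^ l)))
        + (l : ℤ) • of ℤ G (∏ i ∈ Finset.range l, (σ ^ i) g)
      = (l : ℤ) • y := by
  set τ := mapDomainRingHom ℤ (σ : G →* G)
  have htr_eq : ∀ y, tr y = cyclicTrace τ l y := fun y => by
    induction y using MonoidAlgebra.induction_on with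
    | of h => simp only [htr, cyclicTrace_apply, τ, mapDomainRingHom_pow_of]
    | add y z hy hz => rw [map_add, map_add, hy, hz]
    | smul r y hy => rw [map_zsmul, map_zsmul, hy]
  have hfix : (τ ^ l) (of ℤ G g) = of ℤ G g := by
    rw [mapDomainRingHom_pow_of, hσ, MulAut.one_apply]
  obtain ⟨y, hy⟩ := cyclicTrace_pow_sub_cyclicTrace_pow_add_prod_mem hl hfix
  refine ⟨tr y, LinearMap.mem_range_self tr y, ?_⟩
  simp only [AddMonoidHom.smul_apply, ← htr_eq, htr, ← map_pow, τ, mapDomainRingHom_pow_of,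
    ← map_prod] at hy
  simpa only [natCast_zsmul] using hy.symm
end

section
/- Let l be a prime and let m : ℤ/l → ℤ/l be a map. Suppose (z, b) ∈ ℤ/l × ℤ/l with (z, b) ≠ (0, 0) satisfies m(x − z) + b = m(x) for all x ∈ ℤ/l. Then z ≠ 0 and m(x) = m(0) + (b·z⁻¹)·x for all x ∈ ℤ/l. (Equivalently: any element of Maps(ℤ/l, ℤ/l) with nontrivial stabilizer under the action ((z,b)•m)(x) = m(x−z) + b of ℤ/l × ℤ/l is an affine-linear map x ↦ c + jx, and its stabilizer is generated by (1, j).) -/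
/-- Any map `m : ℤ/l → ℤ/l` with a nontrivial stabilizer under the action
`((z,b) • m) x = m (x - z) + b` of `ℤ/l × ℤ/l` is affine-linear: if
`(z, b) ≠ (0, 0)` satisfies `m (x - z) + b = m x` for all `x`, then `z ≠ 0` and
`m x = m 0 + (b * z⁻¹) * x` for all `x`. -/
theorem stmt2 (l : ℕ) (hl : l.Prime) (m : ZMod l → ZMod l)
    (z b : ZMod l) (hzb : (z, b) ≠ (0, 0))
    (h : ∀ x : ZMod l, m (x - z) + b = m x) :
    z ≠ 0 ∧ ∀ x : ZMod l, m x = m 0 + (b * z⁻¹) * x := by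
  haveI : Fact l.Prime := ⟨hl⟩
  have hz : z ≠ 0 := by
    rintro rfl
    apply hzb
    have := h 0
    simp at this
    simp [this]
  refine ⟨hz, ?_⟩
  have key : ∀ n : ℕ, m ((n : ZMod l) * z) = m 0 + (n : ZMod l) * b := by
    intro n
    induction n with
    | zero => simp
    | succ k ih =>
      have := h (((k : ZMod l) + 1) * z)
      rw [add_one_mul, add_sub_cancel_right, ih] at this
      push_cast
      rw [add_one_mul, ← this]; ring
  intro x
  have hzinv : z⁻¹ * z = 1 := ZMod.inv_mul_of_unit z (isUnit_iff_ne_zero.mpr hz)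
  have hx : x = ((x * z⁻¹).val : ZMod l) * z := by
    rw [ZMod.natCast_val, ZMod.cast_id, mul_assoc, hzinv, mul_one]
  calc m x = m (((x * z⁻¹).val : ZMod l) * z) := by rw [← hx]
    _ = m 0 + ((x * z⁻¹).val : ZMod l) * b := key _
    _ = m 0 + (b * z⁻¹) * x := by
        rw [ZMod.natCast_val, ZMod.cast_id]; ring
end

section
/- Let G be a group, G' an abelian normal subgroup of G, and b ∈ G such that every element of G can be written as b^i · g' for some i ∈ ℤ and g' ∈ G' (i.e. G/G' is cyclic generated by the image of b). Then the commutator subgroup ⁅G, G⁆ of G equals ⁅G, G'⁆, the subgroup generated by all commutators of an element of G with an element of G'. -/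
/-!
Modulo `N = ⁅G, G'⁆` the image of `G'` is central, so `G ⧸ N` is cyclic modulo its center
(generated by the image of `b`), hence abelian; therefore `⁅G, G⁆ ≤ N`.
-/

theorem isMulCommutative_of_forall_eq_zpow_mul_mem_center {Q : Type*} [Group Q] (b : Q)
    (hb : ∀ x : Q, ∃ i : ℤ, ∃ z ∈ Subgroup.center Q, x = b ^ i * z) : IsMulCommutative Q := by
  have : IsCyclic (Q ⧸ Subgroup.center Q) := by
    refine ⟨⟨b, fun x ↦ ?_⟩⟩
    induction x using QuotientGroup.induction_on with
    | H x =>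
      obtain ⟨i, z, hz, rfl⟩ := hb x
      exact ⟨i, by simp [(QuotientGroup.eq_one_iff z).mpr hz]⟩
  exact (QuotientGroup.mk' (Subgroup.center Q)).isMulCommutative_of_isCyclic_of_ker_le_center
    (QuotientGroup.ker_mk' _).le

theorem QuotientGroup.mk_mem_center_of_commutator_top_le {G : Type*} [Group G]
    {N H : Subgroup G} [N.Normal] (hH : ⁅(⊤ : Subgroup G), H⁆ ≤ N) {h : G} (hh : h ∈ H) :
    (h : G ⧸ N) ∈ Subgroup.center (G ⧸ N) := by
  rw [Subgroup.mem_center_iff]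
  intro y
  induction y using QuotientGroup.induction_on with
  | H g =>
    rw [← commutatorElement_eq_one_iff_mul_comm, ← QuotientGroup.mk'_apply,
      ← QuotientGroup.mk'_apply, ← map_commutatorElement, QuotientGroup.mk'_apply,
      QuotientGroup.eq_one_iff]
    exact hH (Subgroup.commutator_mem_commutator (Subgroup.mem_top g) hh)

theorem stmt3_general (G : Type*) [Group G] (G' : Subgroup G) [G'.Normal]
    (b : G) (hb : ∀ x : G, ∃ (i : ℤ) (g' : G), g' ∈ G' ∧ x = b ^ i * g') :
    commutator G = ⁅(⊤ : Subgroup G), G'⁆ := by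
  have hcomm : IsMulCommutative (G ⧸ ⁅(⊤ : Subgroup G), G'⁆) := by
    refine isMulCommutative_of_forall_eq_zpow_mul_mem_center (b : G ⧸ _) fun x ↦ ?_
    induction x using QuotientGroup.induction_on with
    | H x =>
      obtain ⟨i, g', hg', rfl⟩ := hb x
      exact ⟨i, g', QuotientGroup.mk_mem_center_of_commutator_top_le le_rfl hg', by simp⟩
  exact le_antisymm (Subgroup.Normal.quotient_commutative_iff_commutator_le.mp hcomm)
    (Subgroup.commutator_mono le_rfl le_top)

/-- If `G'` is an abelian normal subgroup of `G` and `b ∈ G` is such that every element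
of `G` is of the form `b ^ i * g'` with `i : ℤ` and `g' ∈ G'` (i.e. `G/G'` is cyclic,
generated by the image of `b`), then `⁅G, G⁆ = ⁅G, G'⁆`. -/
theorem stmt3 (G : Type*) [Group G] (G' : Subgroup G) [G'.Normal] [IsMulCommutative G']
    (b : G) (hb : ∀ x : G, ∃ (i : ℤ) (g' : G), g' ∈ G' ∧ x = b ^ i * g') :
    commutator G = ⁅(⊤ : Subgroup G), G'⁆ :=
  stmt3_general G G' b hb
end

section
/- Let G be a group, G' an abelian normal subgroup of G, n ≥ 1 a natural number, and a ∈ G such that a^n ∈ G' and every element of G can be written as a^i · g' with i ∈ ℤ and g' ∈ G'. Then for every element c of the commutator subgroup ⁅G, G⁆ of G, the ordered product ∏_{i=0}^{n−1} (a^i c a^{−i}) equals 1. (This is the identity [G,G]^Â = 1, where Â = 1 + a + ⋯ + a^{n−1} acts by conjugation.) -/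
/-!
On the abelian normal subgroup `H`, the map `N x = ∏_{i<n} aⁱ x a⁻ⁱ` is a homomorphism. Since `aⁿ`
centralises `H`, conjugating `x` by `a` only shifts the factors cyclically, so `N` is invariant
under conjugation by `a`, hence by every element of `G = ⟨a⟩ H`. A commutator `⁅aⁱ u, aʲ v⁆` with
`u, v ∈ H` is a product of conjugates of `u`, `v`, `u⁻¹`, `v⁻¹`, so `N` kills it; thus the
commutator subgroup lies in the image of `ker N`.
-/

open scoped IsMulCommutative commutatorElement

namespace Subgroup

variable {G : Type*} [Group G] {H : Subgroup G} [H.Normal]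

theorem commutatorElement_zpow_mul_zpow_mul (a : G) (i j : ℤ) (u v : H) :
    ⁅a ^ i * u, a ^ j * v⁆ = ↑(MulAut.conjNormal (a ^ i) u * MulAut.conjNormal (a ^ (i + j)) v *
      (MulAut.conjNormal (a ^ (i + j)) u)⁻¹ * (MulAut.conjNormal (a ^ j) v)⁻¹) := by
  simp only [commutatorElement_def, coe_mul, coe_inv, MulAut.conjNormal_apply]
  group

variable [IsMulCommutative H]

variable (H) in
/-- The action of `Â = 1 + a + ⋯ + a ^ (n - 1)` on `H` by conjugation. -/
def conjNorm (a : G) (n : ℕ) : H →* H :=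
  ∏ i ∈ Finset.range n, (MulAut.conjNormal (a ^ i) : MulAut H).toMonoidHom

theorem conjNorm_apply (a : G) (n : ℕ) (x : H) :
    conjNorm H a n x = ∏ i ∈ Finset.range n, MulAut.conjNormal (a ^ i) x := by
  simp [conjNorm, MonoidHom.finsetProd_apply]

theorem coe_conjNorm (a : G) (n : ℕ) (x : H) :
    (conjNorm H a n x : G) = ((List.range n).map fun i => a ^ i * x * (a ^ i)⁻¹).prod := by
  induction n with
  | zero => simp [conjNorm_apply]
  | succ n ih =>
    rw [conjNorm_apply, Finset.prod_range_succ, ← conjNorm_apply, coe_mul, ih,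
      List.range_succ, List.map_append, List.prod_append, List.map_singleton, List.prod_singleton]
    rfl

theorem conjNormal_eq_one_of_mem {g : G} (hg : g ∈ H) : (MulAut.conjNormal g : MulAut H) = 1 := by
  ext x
  simp [setLike_mul_comm hg x.2]

theorem conjNorm_conjNormal_self {a : G} {n : ℕ} (han : a ^ n ∈ H) (x : H) :
    conjNorm H a n (MulAut.conjNormal a x) = conjNorm H a n x := by
  have hshift : ∀ i, MulAut.conjNormal (a ^ i) (MulAut.conjNormal a x) =
      MulAut.conjNormal (a ^ (i + 1)) x := by
    intro i
    rw [pow_succ, map_mul, MulAut.mul_apply]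
  rw [conjNorm_apply, conjNorm_apply, Finset.prod_congr rfl fun i _ => hshift i]
  -- the factor for `i = n` equals the one for `i = 0`, as `a ^ n` centralises `H`
  apply mul_right_cancel (b := MulAut.conjNormal (a ^ 0) x)
  rw [← Finset.prod_range_succ' (fun i => MulAut.conjNormal (a ^ i) x), Finset.prod_range_succ,
    conjNormal_eq_one_of_mem han, pow_zero, map_one]

theorem conjNorm_conjNormal {a : G} {n : ℕ} (han : a ^ n ∈ H)
    (hgen : ∀ g : G, ∃ (i : ℤ) (h : G), h ∈ H ∧ g = a ^ i * h) (g : G) (x : H) :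
    conjNorm H a n (MulAut.conjNormal g x) = conjNorm H a n x := by
  let S : Subgroup G :=
    { carrier := {g | ∀ x, conjNorm H a n (MulAut.conjNormal g x) = conjNorm H a n x}
      mul_mem' := fun hg hk x => by rw [map_mul, MulAut.mul_apply, hg, hk]
      one_mem' := fun x => by rw [map_one, MulAut.one_apply]
      inv_mem' := fun {g} hg x => by
        rw [← hg, ← MulAut.mul_apply, ← map_mul, mul_inv_cancel, map_one, MulAut.one_apply] }
  obtain ⟨i, h, hh, rfl⟩ := hgen g
  have ha : a ∈ S := conjNorm_conjNormal_self han
  have hH : h ∈ S := fun x => by rw [conjNormal_eq_one_of_mem hh, MulAut.one_apply]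
  exact S.mul_mem (S.zpow_mem ha i) hH x

theorem commutator_le_map_ker_conjNorm {a : G} {n : ℕ} (han : a ^ n ∈ H)
    (hgen : ∀ g : G, ∃ (i : ℤ) (h : G), h ∈ H ∧ g = a ^ i * h) :
    _root_.commutator G ≤ (conjNorm H a n).ker.map H.subtype := by
  rw [_root_.commutator_def, commutator_le]
  rintro g₁ - g₂ -
  obtain ⟨i, u, hu, rfl⟩ := hgen g₁
  obtain ⟨j, v, hv, rfl⟩ := hgen g₂
  lift u to H using hu
  lift v to H using hv
  rw [commutatorElement_zpow_mul_zpow_mul, ← subtype_apply]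
  refine mem_map_of_mem _ ?_
  simp only [MonoidHom.mem_ker, map_mul, map_inv, conjNorm_conjNormal han hgen]
  rw [mul_right_comm (conjNorm H a n u), mul_inv_cancel, one_mul, mul_inv_cancel]

end Subgroup

theorem stmt6_general (G : Type*) [Group G] (G' : Subgroup G) [G'.Normal] [IsMulCommutative G']
    (n : ℕ) (a : G) (han : a ^ n ∈ G')
    (hgen : ∀ x : G, ∃ (i : ℤ) (g' : G), g' ∈ G' ∧ x = a ^ i * g')
    (c : G) (hc : c ∈ commutator G) :
    ((List.range n).map (fun i => a ^ i * c * (a ^ i)⁻¹)).prod = 1 := by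
  obtain ⟨y, hy, rfl⟩ := Subgroup.commutator_le_map_ker_conjNorm han hgen hc
  rw [Subgroup.coe_subtype, ← Subgroup.coe_conjNorm, MonoidHom.mem_ker.mp hy, Subgroup.coe_one]

/-- **The identity `[G,G]^Â = 1`.**  If `G'` is an abelian normal subgroup of `G`,
`n ≥ 1`, `a ∈ G` satisfies `a ^ n ∈ G'`, and every element of `G` is of the form
`a ^ i * g'` with `i : ℤ`, `g' ∈ G'`, then for every `c` in the commutator subgroup
`⁅G, G⁆` the ordered product `∏_{i=0}^{n-1} a^i c a^{-i}` equals `1`. -/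
theorem stmt6 (G : Type*) [Group G] (G' : Subgroup G) [G'.Normal] [IsMulCommutative G']
    (n : ℕ) (hn : 1 ≤ n) (a : G) (han : a ^ n ∈ G')
    (hgen : ∀ x : G, ∃ (i : ℤ) (g' : G), g' ∈ G' ∧ x = a ^ i * g')
    (c : G) (hc : c ∈ commutator G) :
    ((List.range n).map (fun i => a ^ i * c * (a ^ i)⁻¹)).prod = 1 :=
  stmt6_general G G' n a han hgen c hc
end

section
/- Let l be a prime, G a group, and G' an abelian normal subgroup of G of index l. Then for every g ∈ G with g ∉ G' and every c in the commutator subgroup ⁅G, G⁆ of G, one has (g·c)^l = g^l. -/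
/-!
The transfer `V : G → G'` is a homomorphism into an abelian group, so it kills `⁅G, G⁆`.
Since `G/G'` has prime order, `G = G' ⊔ ⟨g⟩` for `g ∉ G'`, so the powers of `g` that lie in
`G'` are central; hence `V x = x ^ l` for every `x ∉ G'`. As `⁅G, G⁆ ≤ G'`, also `g * c ∉ G'`,
and `(g * c) ^ l = V (g * c) = V g * V c = V g = g ^ l`.
-/

open scoped IsMulCommutative

namespace Subgroup

variable {G : Type*} [Group G] {H : Subgroup G} {g : G}

theorem sup_zpowers_eq_top_of_index_prime (hH : H.index.Prime) (hg : g ∉ H) :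
    H ⊔ zpowers g = ⊤ := by
  have hmul := relIndex_mul_index (le_sup_left : H ≤ H ⊔ zpowers g)
  rcases Nat.prime_mul_iff.mp (hmul ▸ hH) with ⟨-, hsup⟩ | ⟨-, hrel⟩
  · exact index_eq_one.mp hsup
  · exact (hg (relIndex_eq_one.mp hrel (mem_sup_right (mem_zpowers g)))).elim

theorem mem_center_of_commute_of_sup_zpowers_eq_top [IsMulCommutative H]
    (htop : H ⊔ zpowers g = ⊤) {x : G} (hx : x ∈ H) (hxg : Commute x g) : x ∈ center G := by
  have hcent : ⊤ ≤ centralizer {x} := by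
    rw [← htop]
    refine sup_le (fun h hh => ?_) (zpowers_le.mpr ?_)
    · exact mem_centralizer_singleton_iff.mpr
        (congrArg Subtype.val (mul_comm (⟨h, hh⟩ : H) ⟨x, hx⟩))
    · exact mem_centralizer_singleton_iff.mpr hxg.symm.eq
  exact mem_center_iff.mpr fun y => mem_centralizer_singleton_iff.mp (hcent (mem_top y))

end Subgroup

namespace MonoidHom

open Subgroup

variable {G : Type*} [Group G] {H : Subgroup G} [H.Normal] [IsMulCommutative H] [H.FiniteIndex]
  {A : Type*} [CommGroup A]

theorem transfer_eq_pow_index_of_notMem (ϕ : H →* A) (hH : H.index.Prime) {g : G}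
    (hg : g ∉ H) : transfer ϕ g = ϕ ⟨g ^ H.index, H.pow_index_mem g⟩ := by
  refine transfer_eq_pow ϕ g fun k g₀ hk => ?_
  have hgk : g ^ k ∈ H := by simpa [mul_assoc] using ‹H.Normal›.conj_mem _ hk g₀
  have hcen := mem_center_of_commute_of_sup_zpowers_eq_top
    (sup_zpowers_eq_top_of_index_prime hH hg) hgk ((Commute.refl g).pow_left k)
  rw [mul_assoc, ← mem_center_iff.mp hcen g₀, inv_mul_cancel_left]

end MonoidHom

/-- If `G'` is an abelian normal subgroup of prime index `l` in `G`, then for every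
`g ∈ G` with `g ∉ G'` and every `c` in the commutator subgroup `⁅G, G⁆`,
one has `(g c)^l = g^l`. -/
theorem stmt8 (l : ℕ) (hl : l.Prime) (G : Type*) [Group G]
    (G' : Subgroup G) [G'.Normal] [IsMulCommutative G'] (hidx : G'.index = l)
    (g : G) (hg : g ∉ G') (c : G) (hc : c ∈ commutator G) :
    (g * c) ^ l = g ^ l := by
  have : G'.FiniteIndex := ⟨hidx ▸ hl.ne_zero⟩
  have hprime : G'.index.Prime := hidx ▸ hl
  have hc' : c ∈ G' := Subgroup.Normal.commutator_le_of_self_sup_commutative_eq_top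
    (Subgroup.sup_zpowers_eq_top_of_index_prime hprime hg) inferInstance hc
  have hgc : g * c ∉ G' := fun h => hg ((G'.mul_mem_cancel_right hc').mp h)
  set V := (MonoidHom.id G').transfer
  have hVc : V c = 1 := Abelianization.commutator_subset_ker V hc
  have hV : ∀ x ∉ G', (V x : G) = x ^ l := fun x hx => by
    rw [MonoidHom.transfer_eq_pow_index_of_notMem _ hprime hx, MonoidHom.id_apply]
    exact congrArg (x ^ ·) hidx
  rw [← hV _ hgc, ← hV _ hg, map_mul, hVc, mul_one]
end

section
/- Let G be a finite group, H a subgroup of G, φ : H → ℂ any function, and l a positive integer. Extend φ to φ̇ : G → ℂ by setting φ̇ = φ on H and φ̇ = 0 off H, and define Ind φ : G → ℂ by (Ind φ)(g) = (1/|H|) · ∑_{x ∈ G} φ̇(x⁻¹ g x). Let ψ_l φ : H → ℂ be the function h ↦ φ(h^l). Then for every g ∈ G: (Ind φ)(g^l) − (Ind (ψ_l φ))(g) = (1/|H|) · ∑_{x ∈ G, x⁻¹gx ∉ H, (x⁻¹gx)^l ∈ H} φ((x⁻¹ g x)^l). (This is the paper's computation χ(g) = ∑_{m(g^t)=1} χ'(g^{lt})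 for χ = ψ_l(ind χ') − ind(ψ_l χ').) -/
open Finset

/-- The extension by zero of a function on a subgroup `H` of `G`. -/
noncomputable def extZero {G : Type*} [Group G] (H : Subgroup G) [DecidablePred (· ∈ H)] (φ : H → ℂ) : G → ℂ :=
  fun x => if hx : x ∈ H then φ ⟨x, hx⟩ else 0

/-- The function on `G` induced from a function `φ` on the subgroup `H`:
`(Ind φ) g = (1/|H|) · ∑_{x ∈ G} φ̇ (x⁻¹ g x)`. -/
noncomputable def Ind {G : Type*} [Group G] [Fintype G] (H : Subgroup G) [DecidablePred (· ∈ H)] (φ : H → ℂ) :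
    G → ℂ :=
  fun g => (1 / (Nat.card H : ℂ)) * ∑ x : G, extZero H φ (x⁻¹ * g * x)

/-- For a finite group `G`, a subgroup `H`, any `φ : H → ℂ` and a positive integer `l`,
with `ψ_l φ : h ↦ φ (h^l)`:
`(Ind φ)(g^l) - (Ind (ψ_l φ))(g)
  = (1/|H|) · ∑_{x : x⁻¹gx ∉ H, (x⁻¹gx)^l ∈ H} φ((x⁻¹ g x)^l)`. -/
theorem stmt9 (G : Type*) [Group G] [Fintype G] (H : Subgroup G)
    [DecidablePred (· ∈ H)] (φ : H → ℂ) (l : ℕ) (hl : 0 < l) (g : G) :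
    Ind H φ (g ^ l) - Ind H (fun h : H => φ (h ^ l)) g
      = (1 / (Nat.card H : ℂ)) *
          ∑ x ∈ univ.filter (fun x : G => x⁻¹ * g * x ∉ H ∧ (x⁻¹ * g * x) ^ l ∈ H),
            extZero H φ ((x⁻¹ * g * x) ^ l) := by
  unfold Ind
  rw [← mul_sub, ← Finset.sum_sub_distrib]
  congr 1
  rw [Finset.sum_filter]
  apply Finset.sum_congr rfl
  intro x _
  have hconj : x⁻¹ * g ^ l * x = (x⁻¹ * g * x) ^ l := by
    have := conj_pow (i := l) (a := x⁻¹) (b := g)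
    simpa using this.symm
  rw [hconj]
  unfold extZero
  by_cases hy : x⁻¹ * g * x ∈ H
  · have hyl : (x⁻¹ * g * x) ^ l ∈ H := pow_mem hy l
    simp only [hy, hyl, dif_pos, not_true, false_and, if_false]
    have : (⟨x⁻¹ * g * x, hy⟩ : H) ^ l = ⟨(x⁻¹ * g * x) ^ l, hyl⟩ := by
      ext; simp
    rw [this, sub_self]
  · by_cases hyl : (x⁻¹ * g * x) ^ l ∈ H <;> simp [hy, hyl]
end
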